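/- Let A be a finitely generated K-algebra with standard filtration {A_i}, G a finite group acting on A by filtration-preserving algebra automorphisms, and A#G the crossed product. Then the holonomic numbers satisfy h_{A#G} = h_A. -/

import Mathlib

/-- The degree of growth of `f : ℕ → ℕ`:
`γ(f) = inf { r ∈ ℝ | f i ≤ i ^ r for all sufficiently large i }`, with `γ(f) = ∞`
(the infimum of the empty set in `EReal`) if no such `r` exists. -/
noncomputable def gammaDeg (f : ℕ → ℕ) : EReal :=
  sInf ((fun r : ℝ => (r : EReal)) '' {r : ℝ | ∃ N : ℕ, ∀ i ≥ N, (f i : ℝ) ≤ (i : ℝ) ^ r})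

universe u

/-- The `i`-th term `AᵢM₀` of the standard filtration of an `A`-module `M`
determined by a generating subspace `V ⊆ A` of the algebra (so `Aᵢ = V^i`) and a
generating subspace `M₀ ⊆ M`, as a `K`-subspace of `M`. -/
def modFilt (K A M : Type u) [Field K] [Ring A] [Algebra K A]
    [AddCommGroup M] [Module K M] [Module A M] [IsScalarTower K A M]
    (V : Submodule K A) (M₀ : Submodule K M) (i : ℕ) : Submodule K M :=
  Submodule.span K {z : M | ∃ a ∈ V ^ i, ∃ m ∈ M₀, z = a • m}

/-- The Gelfand–Kirillov dimension of an `A`-module `M` relative to the standard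
filtration `{V^i}` of `A`: the infimum over all finite-dimensional generating
subspaces `M₀` of `γ(i ↦ dim_K V^i M₀)` (the value is independent of the choice
of `M₀`, so the infimum realizes the usual definition). -/
noncomputable def gkDim (K A M : Type u) [Field K] [Ring A] [Algebra K A]
    [AddCommGroup M] [Module K M] [Module A M] [IsScalarTower K A M]
    (V : Submodule K A) : EReal :=
  sInf {x : EReal | ∃ M₀ : Submodule K M, FiniteDimensional K M₀ ∧
    (∀ m : M, ∃ n : ℕ, m ∈ modFilt K A M V M₀ n) ∧
    x = gammaDeg fun i => Module.finrank K (modFilt K A M V M₀ i)}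

/-- The holonomic number of a finitely generated algebra `A` (with standard
filtration `{V^i}`): the infimum of `GK(M)` over all nonzero finitely generated
left `A`-modules `M`. -/
noncomputable def holonomicNumber (K A : Type u) [Field K] [Ring A] [Algebra K A]
    (V : Submodule K A) : EReal :=
  sInf {x : EReal | ∃ (M : Type u) (_ : AddCommGroup M) (_ : Module K M)
    (_ : Module A M) (_ : IsScalarTower K A M), Nontrivial M ∧
    (∃ M₀ : Submodule K M, FiniteDimensional K M₀ ∧
      ∀ m : M, ∃ n : ℕ, m ∈ modFilt K A M V M₀ n) ∧
    x = gkDim K A M V}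

section Aux
lemma gammaDeg_le_coe (f : ℕ → ℕ) (r : ℝ) (h : ∃ N : ℕ, ∀ i ≥ N, (f i : ℝ) ≤ (i : ℝ) ^ r) :
    gammaDeg f ≤ (r : EReal) :=
  sInf_le ⟨r, h, rfl⟩

/-- Master comparison lemma for growth degrees. -/
lemma gammaDeg_le_gammaDeg (f g : ℕ → ℕ) (c k s : ℕ) (hk : 1 ≤ k)
    (h : ∀ i : ℕ, 1 ≤ i → f i ≤ c * g (k * i + s)) : gammaDeg f ≤ gammaDeg g := by
  refine le_sInf ?_
  rintro x ⟨r, ⟨N, hr⟩, rfl⟩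
  rcases lt_or_ge r 0 with hneg | hpos
  · -- g is eventually 0, hence so is f
    refine gammaDeg_le_coe f r ⟨N + 2, fun i hi => ?_⟩
    have hi1 : 1 ≤ i := by omega
    have hgz : g (k * i + s) = 0 := by
      have hki : k * i + s ≥ N := by nlinarith
      have h2 : (2 : ℝ) ≤ ((k * i + s : ℕ) : ℝ) := by
        have : 2 ≤ k * i + s := by nlinarith
        exact_mod_cast this
      have hlt : ((k * i + s : ℕ) : ℝ) ^ r < 1 :=
        Real.rpow_lt_one_of_one_lt_of_neg (by linarith) hneg
      have := hr (k * i + s) hki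
      have hlt1 : (g (k * i + s) : ℝ) < 1 := lt_of_le_of_lt this hlt
      have : g (k * i + s) < 1 := by exact_mod_cast hlt1
      omega
    have hfz : f i = 0 := by
      have := h i hi1
      rw [hgz, Nat.mul_zero] at this
      omega
    rw [hfz]
    push_cast
    exact (Real.rpow_pos_of_pos (by exact_mod_cast hi1 : (0:ℝ) < (i:ℝ)) r).le
  · -- r ≥ 0 case: show γ f ≤ r + ε for every ε > 0
    have key : ∀ ε : ℝ, 0 < ε → gammaDeg f ≤ ((r + ε : ℝ) : EReal) := by
      intro ε hε
      -- find N₂ with c * (k+s)^r ≤ i^ε for i ≥ N₂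
      have htend : Filter.Tendsto (fun i : ℕ => (i : ℝ) ^ ε) Filter.atTop Filter.atTop :=
        (tendsto_rpow_atTop hε).comp tendsto_natCast_atTop_atTop
      obtain ⟨N₂, hN₂⟩ := (htend.eventually_ge_atTop ((c : ℝ) * ((k + s : ℕ) : ℝ) ^ r)).exists_forall_of_atTop
      refine gammaDeg_le_coe f (r + ε) ⟨max (max N₂ N) 1, fun i hi => ?_⟩
      have hi1 : 1 ≤ i := le_trans (le_max_right _ _) hi
      have hiN₂ : N₂ ≤ i := le_trans (le_max_left _ _) (le_trans (le_max_left _ _) hi)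
      have hiN : N ≤ i := le_trans (le_max_right _ _) (le_trans (le_max_left _ _) hi)
      have hipos : (0:ℝ) < (i:ℝ) := by exact_mod_cast hi1
      have hkiN : k * i + s ≥ N := by nlinarith
      have h1 : (f i : ℝ) ≤ (c : ℝ) * (g (k * i + s) : ℝ) := by
        have := h i hi1; push_cast; exact_mod_cast Nat.cast_le.mpr this
      have h2 : (g (k * i + s) : ℝ) ≤ ((k * i + s : ℕ) : ℝ) ^ r := hr _ hkiN
      have hbase : ((k * i + s : ℕ) : ℝ) ≤ ((k + s : ℕ) : ℝ) * (i : ℝ) := by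
        push_cast
        nlinarith [(by exact_mod_cast hi1 : (1:ℝ) ≤ (i:ℝ)), (Nat.cast_nonneg s : (0:ℝ) ≤ (s:ℝ))]
      have h3 : ((k * i + s : ℕ) : ℝ) ^ r ≤ (((k + s : ℕ) : ℝ) * (i : ℝ)) ^ r :=
        Real.rpow_le_rpow (by positivity) hbase hpos
      have hks : (0:ℝ) ≤ ((k + s : ℕ) : ℝ) := Nat.cast_nonneg _
      have h4 : (((k + s : ℕ) : ℝ) * (i : ℝ)) ^ r = ((k + s : ℕ) : ℝ) ^ r * (i : ℝ) ^ r :=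
        Real.mul_rpow hks hipos.le
      have h5 : (c : ℝ) * ((k + s : ℕ) : ℝ) ^ r ≤ (i : ℝ) ^ ε := hN₂ i hiN₂
      calc (f i : ℝ) ≤ (c : ℝ) * (g (k * i + s) : ℝ) := h1
        _ ≤ (c : ℝ) * (((k + s : ℕ) : ℝ) ^ r * (i : ℝ) ^ r) := by
            refine mul_le_mul_of_nonneg_left (le_trans h2 (by rw [← h4]; exact h3)) (Nat.cast_nonneg _)
        _ = ((c : ℝ) * ((k + s : ℕ) : ℝ) ^ r) * (i : ℝ) ^ r := by ring
        _ ≤ (i : ℝ) ^ ε * (i : ℝ) ^ r := by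
            refine mul_le_mul_of_nonneg_right h5 (Real.rpow_nonneg hipos.le r)
        _ = (i : ℝ) ^ (r + ε) := by rw [← Real.rpow_add hipos]; ring_nf
    -- conclude
    by_contra hcon
    push_neg at hcon
    obtain ⟨y, hy1, hy2⟩ := EReal.exists_between_coe_real hcon
    have hε : (0:ℝ) < y - r := by
      have := EReal.coe_lt_coe_iff.mp hy1; linarith
    have := key (y - r) hε
    rw [show r + (y - r) = y by ring] at this
    exact absurd (lt_of_le_of_lt this hy2) (lt_irrefl _)

section Filt

variable {K B M : Type u} [Field K] [Ring B] [Algebra K B]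
    [AddCommGroup M] [Module K M] [Module B M] [IsScalarTower K B M]

/-- scalar multiplication by `b : B` as a `K`-linear map. -/
def bsmul (K : Type u) {B M : Type u} [Field K] [Ring B] [Algebra K B]
    [AddCommGroup M] [Module K M] [Module B M] [IsScalarTower K B M] (b : B) : M →ₗ[K] M where
  toFun m := b • m
  map_add' := smul_add b
  map_smul' k m := (smul_comm b k m)

@[simp] lemma bsmul_apply (b : B) (m : M) : bsmul K b m = b • m := rfl

lemma one_mem_pow {V : Submodule K B} (h1 : (1 : B) ∈ V) (i : ℕ) : (1 : B) ∈ V ^ i := by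
  induction i with
  | zero =>
      rw [pow_zero]
      exact Submodule.one_le.mp (le_refl _)
  | succ n ih =>
      rw [pow_succ]
      simpa using Submodule.mul_mem_mul ih h1

lemma pow_le_pow_exp {V : Submodule K B} (h1 : (1 : B) ∈ V) {i j : ℕ} (hij : i ≤ j) :
    V ^ i ≤ V ^ j := by
  obtain ⟨d, rfl⟩ := Nat.exists_eq_add_of_le hij
  intro a ha
  rw [pow_add]
  simpa using Submodule.mul_mem_mul ha (one_mem_pow h1 d)

lemma le_modFilt {V : Submodule K B} (h1 : (1 : B) ∈ V) (M₀ : Submodule K M) (i : ℕ) :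
    M₀ ≤ modFilt K B M V M₀ i := by
  intro m hm
  exact Submodule.subset_span ⟨1, one_mem_pow h1 i, m, hm, (one_smul B m).symm⟩

lemma modFilt_mono_exp {V : Submodule K B} (h1 : (1 : B) ∈ V) (M₀ : Submodule K M) {i j : ℕ}
    (hij : i ≤ j) : modFilt K B M V M₀ i ≤ modFilt K B M V M₀ j := by
  refine Submodule.span_le.mpr ?_
  rintro z ⟨a, ha, m, hm, rfl⟩
  exact Submodule.subset_span ⟨a, pow_le_pow_exp h1 hij ha, m, hm, rfl⟩

lemma modFilt_mono_base {V : Submodule K B} {M₀ M₁ : Submodule K M} (h : M₀ ≤ M₁) (i : ℕ) :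
    modFilt K B M V M₀ i ≤ modFilt K B M V M₁ i := by
  refine Submodule.span_le.mpr ?_
  rintro z ⟨a, ha, m, hm, rfl⟩
  exact Submodule.subset_span ⟨a, ha, m, h hm, rfl⟩

lemma smul_modFilt {V : Submodule K B} {M₀ : Submodule K M} {j i : ℕ} {b : B} (hb : b ∈ V ^ j)
    {x : M} (hx : x ∈ modFilt K B M V M₀ i) : b • x ∈ modFilt K B M V M₀ (j + i) := by
  induction hx using Submodule.span_induction with
  | mem z hz =>
      obtain ⟨a, ha, m, hm, rfl⟩ := hz
      rw [← mul_smul]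
      exact Submodule.subset_span ⟨b * a, (by rw [pow_add]; exact Submodule.mul_mem_mul hb ha), m, hm, rfl⟩
  | zero => simpa using Submodule.zero_mem _
  | add x y _ _ hx hy => rw [smul_add]; exact Submodule.add_mem _ hx hy
  | smul k x _ hx => rw [smul_comm]; exact Submodule.smul_mem _ _ hx

lemma fd_finsetSup {ι : Type u} (t : Finset ι) (f : ι → Submodule K M)
    (hf : ∀ a ∈ t, FiniteDimensional K (f a)) : FiniteDimensional K ↥(t.sup f) := by
  classical
  induction t using Finset.induction_on with
  | empty => rw [Finset.sup_empty]; exact (inferInstance : FiniteDimensional K (⊥ : Submodule K M))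
  | @insert a s hnot ih =>
      rw [Finset.sup_insert]
      haveI := hf a (Finset.mem_insert_self a s)
      haveI := ih (fun b hb => hf b (Finset.mem_insert_of_mem hb))
      infer_instance

lemma finrank_sup_le (p q : Submodule K M) [FiniteDimensional K p] [FiniteDimensional K q] :
    Module.finrank K ↥(p ⊔ q) ≤ Module.finrank K p + Module.finrank K q := by
  have := Submodule.finrank_sup_add_finrank_inf_eq p q
  omega

lemma finrank_finsetSup_le {ι : Type u} (t : Finset ι) (f : ι → Submodule K M)
    (hf : ∀ a ∈ t, FiniteDimensional K (f a)) :
    Module.finrank K ↥(t.sup f) ≤ ∑ a ∈ t, Module.finrank K (f a) := by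
  classical
  induction t using Finset.induction_on with
  | empty => rw [Finset.sup_empty]; simp [finrank_bot]
  | @insert a s hnot ih =>
      haveI := hf a (Finset.mem_insert_self a s)
      haveI := fd_finsetSup s f (fun b hb => hf b (Finset.mem_insert_of_mem hb))
      rw [Finset.sup_insert, Finset.sum_insert hnot]
      exact le_trans (finrank_sup_le _ _)
        (Nat.add_le_add_left (ih (fun b hb => hf b (Finset.mem_insert_of_mem hb))) _)

lemma pow_fg {V : Submodule K B} (hV : FiniteDimensional K V) (i : ℕ) : (V ^ i).FG := by
  induction i with
  | zero =>
      rw [pow_zero, Submodule.one_eq_span]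
      exact Submodule.fg_span_singleton 1
  | succ n ih =>
      rw [pow_succ]
      exact Submodule.FG.mul ih ((Submodule.fg_iff_finiteDimensional V).mpr hV)

lemma modFilt_le_sup {V : Submodule K B} {M₀ : Submodule K M} {i : ℕ} {t : Finset B}
    (ht : Submodule.span K (t : Set B) = V ^ i) :
    modFilt K B M V M₀ i ≤ t.sup fun b => M₀.map (bsmul K b) := by
  refine Submodule.span_le.mpr ?_
  rintro z ⟨a, ha, m, hm, rfl⟩
  rw [← ht] at ha
  induction ha using Submodule.span_induction with
  | mem b hb =>
      exact Finset.le_sup (f := fun b => M₀.map (bsmul K b)) (Finset.mem_coe.mp hb) ⟨m, hm, rfl⟩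
  | zero => simpa using Submodule.zero_mem _
  | add x y _ _ hx hy => rw [add_smul]; exact Submodule.add_mem _ hx hy
  | smul k b _ hb =>
      have : (k • b) • m = k • (b • m) := smul_assoc k b m
      rw [this]; exact Submodule.smul_mem _ _ hb

lemma modFilt_fd {V : Submodule K B} (hV : FiniteDimensional K V) (M₀ : Submodule K M)
    [FiniteDimensional K M₀] (i : ℕ) : FiniteDimensional K (modFilt K B M V M₀ i) := by
  obtain ⟨t, ht⟩ := pow_fg hV i
  haveI : FiniteDimensional K ((t.sup fun b => M₀.map (bsmul K b)) : Submodule K M) :=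
    fd_finsetSup t _ (fun b _ => Module.Finite.map M₀ (bsmul K b))
  exact Submodule.finiteDimensional_of_le (modFilt_le_sup ht)

/-- Finite-dimensional subspaces are contained in some member of an exhausting
monotone chain of subspaces. -/
lemma fd_le_chain {N : Type u} [AddCommGroup N] [Module K N] (T : ℕ → Submodule K N)
    (hmono : ∀ {i j : ℕ}, i ≤ j → T i ≤ T j) (S : Submodule K N) (hS : FiniteDimensional K S)
    (h : ∀ b : N, ∃ n, b ∈ T n) : ∃ t, S ≤ T t := by
  classical
  obtain ⟨s, hs⟩ := (Submodule.fg_iff_finiteDimensional S).mpr hS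
  choose n hn using h
  refine ⟨s.sup n, ?_⟩
  rw [← hs, Submodule.span_le]
  intro b hb
  exact hmono (Finset.le_sup hb) (hn b)

end Filt



section Cross

variable {K A C G : Type u}
    [Field K] [Ring A] [Algebra K A] [Ring C] [Algebra K C] [Group G]
    (σ : G →* (A ≃ₐ[K] A))
    (φ : A →ₐ[K] C) (u : G →* Cˣ)

variable {N : Type u} [AddCommGroup N] [Module K N] [Module A N] [IsScalarTower K A N]

/-- smul as a K-linear map (copy of bsmul from part B; will be merged). -/
def bsmul' (K : Type u) {B M : Type u} [Field K] [Ring B] [Algebra K B]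
    [AddCommGroup M] [Module K M] [Module B M] [IsScalarTower K B M] (b : B) : M →ₗ[K] M where
  toFun m := b • m
  map_add' := smul_add b
  map_smul' k m := (smul_comm b k m)

variable (N) in
/-- The action of the generator `φ a * u g` on the induced module `G →₀ N`. -/
noncomputable def actFun (g : G) (a : A) : (G →₀ N) →ₗ[K] (G →₀ N) :=
  Finsupp.lsum K fun h => (Finsupp.lsingle (g * h)) ∘ₗ (bsmul' K (σ ((g * h)⁻¹) a))

lemma actFun_single (g : G) (a : A) (h : G) (n : N) :
    actFun σ N g a (Finsupp.single h n) = Finsupp.single (g * h) (σ ((g * h)⁻¹) a • n) := by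
  simp [actFun, bsmul']

lemma hσmul (x y : G) (b : A) : σ (x * y) b = σ x (σ y b) := by
  rw [map_mul]; rfl

variable (N) in
/-- The action of `A ⋊ G` generators, linear in `a`. -/
noncomputable def actL (g : G) : A →ₗ[K] ((G →₀ N) →ₗ[K] (G →₀ N)) where
  toFun := actFun σ N g
  map_add' a b := by
    apply Finsupp.lhom_ext
    intro h n
    simp [actFun_single, map_add, add_smul, Finsupp.single_add]
  map_smul' k a := by
    apply Finsupp.lhom_ext
    intro h n
    simp [actFun_single, map_smul, smul_assoc, Finsupp.smul_single]

variable (N) in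
noncomputable def bigL : (G →₀ A) →ₗ[K] ((G →₀ N) →ₗ[K] (G →₀ N)) :=
  Finsupp.lsum K fun g => actL σ N g

/-- `θ : G →₀ A → C`, the free `A`-module structure map. -/
noncomputable def thetaL : (G →₀ A) →ₗ[K] C :=
  Finsupp.lsum K fun g => (LinearMap.mulRight K ((u g : C))) ∘ₗ φ.toLinearMap

lemma thetaL_single (g : G) (a : A) : thetaL φ u (Finsupp.single g a) = φ a * (u g : C) := by
  simp [thetaL]

lemma thetaL_coe : ⇑(thetaL φ u) = fun f : G →₀ A => f.sum fun g a => φ a * (u g : C) := by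
  funext f
  simp [thetaL, Finsupp.lsum_apply, Finsupp.sum]

section WithFree

lemma thetaL_bij (hfree : Function.Bijective fun f : G →₀ A => f.sum fun g a => φ a * (u g : C)) :
    Function.Bijective (thetaL φ u) := by
  rw [thetaL_coe]; exact hfree

lemma span_gen (hfree : Function.Bijective fun f : G →₀ A => f.sum fun g a => φ a * (u g : C)) :
    Submodule.span K {c : C | ∃ a : A, ∃ g : G, c = φ a * (u g : C)} = ⊤ := by
  rw [eq_top_iff]
  intro c _
  obtain ⟨f, rfl⟩ := (thetaL_bij φ u hfree).surjective c
  rw [show thetaL φ u f = f.sum fun g a => φ a * (u g : C) by rw [thetaL_coe]]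
  refine Submodule.sum_mem _ fun g _ => ?_
  exact Submodule.subset_span ⟨f g, g, rfl⟩

variable (N) in
noncomputable def PhiL
    (hfree : Function.Bijective fun f : G →₀ A => f.sum fun g a => φ a * (u g : C)) :
    C →ₗ[K] ((G →₀ N) →ₗ[K] (G →₀ N)) :=
  (bigL σ N) ∘ₗ (LinearEquiv.ofBijective (thetaL φ u) (thetaL_bij φ u hfree)).symm.toLinearMap

lemma PhiL_gen
    (hfree : Function.Bijective fun f : G →₀ A => f.sum fun g a => φ a * (u g : C))
    (g : G) (a : A) : PhiL σ φ u N hfree (φ a * (u g : C)) = actFun σ N g a := by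
  have h1 : (LinearEquiv.ofBijective (thetaL φ u) (thetaL_bij φ u hfree)).symm
      (φ a * (u g : C)) = Finsupp.single g a := by
    rw [LinearEquiv.symm_apply_eq]
    show (φ a * (u g : C)) = thetaL φ u (Finsupp.single g a)
    rw [thetaL_single]
  show bigL σ N ((LinearEquiv.ofBijective (thetaL φ u)
      (thetaL_bij φ u hfree)).symm (φ a * (u g : C))) = _
  rw [h1]
  show (Finsupp.lsum K fun g => actL σ N g) (Finsupp.single g a) = _
  simp only [Finsupp.lsum_single]
  rfl

lemma act_comp {N : Type u} [AddCommGroup N] [Module K N] [Module A N] [IsScalarTower K A N]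
    (g h : G) (a b : A) :
    (actFun σ N g a) ∘ₗ (actFun σ N h b) = actFun σ N (g * h) (a * σ g b) := by
  apply Finsupp.lhom_ext
  intro k n
  simp only [LinearMap.comp_apply, actFun_single]
  have hkey : g * (h * k) = g * h * k := (mul_assoc g h k).symm
  rw [hkey]
  congr 1
  rw [map_mul, mul_smul]
  congr 2
  rw [← hσmul σ]
  congr 1
  group

lemma PhiL_one
    (hfree : Function.Bijective fun f : G →₀ A => f.sum fun g a => φ a * (u g : C)) :
    PhiL σ φ u N hfree 1 = LinearMap.id := by
  have h1 : (1 : C) = φ (1 : A) * ((u (1 : G) : C)) := by simp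
  rw [h1, PhiL_gen]
  apply Finsupp.lhom_ext
  intro h n
  simp [actFun_single]

lemma PhiL_mul
    (hfree : Function.Bijective fun f : G →₀ A => f.sum fun g a => φ a * (u g : C))
    (hcov : ∀ (g : G) (a : A), (u g : C) * φ a = φ (σ g a) * (u g : C))
    (c c' : C) :
    PhiL σ φ u N hfree (c * c') = (PhiL σ φ u N hfree c) ∘ₗ (PhiL σ φ u N hfree c') := by
  have key : ∀ (g h : G) (a b : A),
      PhiL σ φ u N hfree ((φ a * (u g : C)) * (φ b * (u h : C))) =
        (PhiL σ φ u N hfree (φ a * (u g : C))) ∘ₗ (PhiL σ φ u N hfree (φ b * (u h : C))) := by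
    intro g h a b
    have hmul : (φ a * (u g : C)) * (φ b * (u h : C)) = φ (a * σ g b) * ((u (g * h) : C)) := by
      calc (φ a * (u g : C)) * (φ b * (u h : C))
          = φ a * (((u g : C) * φ b) * (u h : C)) := by rw [mul_assoc, mul_assoc]
        _ = φ a * ((φ (σ g b) * (u g : C)) * (u h : C)) := by rw [hcov]
        _ = (φ a * φ (σ g b)) * ((u g : C) * (u h : C)) := by rw [mul_assoc, mul_assoc]
        _ = φ (a * σ g b) * ((u (g * h) : C)) := by rw [← map_mul φ, ← Units.val_mul, ← map_mul u]
    rw [hmul, PhiL_gen, PhiL_gen, PhiL_gen, act_comp]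
  have hc : c ∈ Submodule.span K {c : C | ∃ a : A, ∃ g : G, c = φ a * (u g : C)} := by
    rw [span_gen φ u hfree]; trivial
  have hc' : c' ∈ Submodule.span K {c : C | ∃ a : A, ∃ g : G, c = φ a * (u g : C)} := by
    rw [span_gen φ u hfree]; trivial
  induction hc using Submodule.span_induction with
  | mem x hx =>
      obtain ⟨a, g, rfl⟩ := hx
      induction hc' using Submodule.span_induction with
      | mem y hy =>
          obtain ⟨b, h, rfl⟩ := hy
          exact key g h a b
      | zero => simp
      | add y z _ _ hy hz => rw [mul_add, map_add, map_add, hy, hz, LinearMap.comp_add]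
      | smul k y _ hy =>
          rw [mul_smul_comm, map_smul, map_smul, hy]
          ext x
          simp
  | zero => simp
  | add x y _ _ hx hy => rw [add_mul, map_add, map_add, hx, hy, LinearMap.add_comp]
  | smul k x _ hx =>
      rw [smul_mul_assoc, map_smul, map_smul, hx]
      ext z
      simp

variable (N) in
/-- The algebra map `C →ₐ End K (G →₀ N)` defining the induced module. -/
noncomputable def PhiA
    (hfree : Function.Bijective fun f : G →₀ A => f.sum fun g a => φ a * (u g : C))
    (hcov : ∀ (g : G) (a : A), (u g : C) * φ a = φ (σ g a) * (u g : C)) :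
    C →ₐ[K] Module.End K (G →₀ N) :=
  AlgHom.ofLinearMap (PhiL σ φ u N hfree) (PhiL_one σ φ u hfree)
    (PhiL_mul σ φ u hfree hcov)

end WithFree

end Cross



section Filt
variable {K B M : Type u} [Field K] [Ring B] [Algebra K B]
    [AddCommGroup M] [Module K M] [Module B M] [IsScalarTower K B M]

lemma pow_le_pow_base {V W : Submodule K B} (h : V ≤ W) (i : ℕ) : V ^ i ≤ W ^ i := by
  induction i with
  | zero => simp
  | succ n ih =>
      rw [pow_succ, pow_succ]
      exact Submodule.mul_le.mpr fun x hx y hy =>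
        Submodule.mul_mem_mul (ih hx) (h hy)
end Filt

section Main
variable {K A C G : Type u}
    [Field K] [Ring A] [Algebra K A] [Ring C] [Algebra K C] [Group G]
    (σ : G →* (A ≃ₐ[K] A)) (φ : A →ₐ[K] C) (u : G →* Cˣ)
    (VA : Submodule K A) (VC : Submodule K C)

/-- The auxiliary filtration `T j = span {φ a * u g : a ∈ VA ^ j}` on `C`. -/
def TT (j : ℕ) : Submodule K C :=
  Submodule.span K {c : C | ∃ a ∈ (VA ^ j : Submodule K A), ∃ g : G, c = φ a * (u g : C)}

lemma sigma_pow (hpres : ∀ (g : G), ∀ x ∈ VA, σ g x ∈ VA) (g : G) {j : ℕ} {a : A}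
    (ha : a ∈ VA ^ j) : σ g a ∈ VA ^ j := by
  have hle : Submodule.map (σ g).toAlgHom.toLinearMap VA ≤ VA := by
    rintro _ ⟨x, hx, rfl⟩
    exact hpres g x hx
  have h2 : Submodule.map (σ g).toAlgHom.toLinearMap (VA ^ j) ≤ VA ^ j := by
    rw [Submodule.map_pow]
    exact pow_le_pow_base hle j
  exact h2 ⟨a, ha, rfl⟩

lemma TT_mono (hVA1 : (1 : A) ∈ VA) {i j : ℕ} (hij : i ≤ j) :
    TT φ u VA i ≤ TT φ u VA j := by
  refine Submodule.span_le.mpr ?_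
  rintro _ ⟨a, ha, g, rfl⟩
  exact Submodule.subset_span ⟨a, pow_le_pow_exp hVA1 hij ha, g, rfl⟩

lemma TT_mul (hpres : ∀ (g : G), ∀ x ∈ VA, σ g x ∈ VA)
    (hcov : ∀ (g : G) (a : A), (u g : C) * φ a = φ (σ g a) * (u g : C))
    (i j : ℕ) : TT φ u VA i * TT φ u VA j ≤ TT φ u VA (i + j) := by
  refine Submodule.mul_le.mpr fun x hx y hy => ?_
  induction hx using Submodule.span_induction with
  | mem x hxg =>
      obtain ⟨a, ha, g, rfl⟩ := hxg
      induction hy using Submodule.span_induction with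
      | mem y hyg =>
          obtain ⟨b, hb, h, rfl⟩ := hyg
          have : (φ a * (u g : C)) * (φ b * (u h : C)) = φ (a * σ g b) * ((u (g * h) : C)) := by
            calc (φ a * (u g : C)) * (φ b * (u h : C))
                = φ a * (((u g : C) * φ b) * (u h : C)) := by
                  rw [mul_assoc, mul_assoc]
              _ = φ a * ((φ (σ g b) * (u g : C)) * (u h : C)) := by rw [hcov]
              _ = (φ a * φ (σ g b)) * ((u g : C) * (u h : C)) := by
                  rw [mul_assoc, mul_assoc]
              _ = φ (a * σ g b) * ((u (g * h) : C)) := by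
                  rw [← map_mul φ, ← Units.val_mul, ← map_mul u]
          rw [this]
          refine Submodule.subset_span ⟨a * σ g b, ?_, g * h, rfl⟩
          rw [pow_add]
          exact Submodule.mul_mem_mul ha (sigma_pow σ VA hpres g hb)
      | zero => rw [mul_zero]; exact Submodule.zero_mem _
      | add y z _ _ hy hz => rw [mul_add]; exact Submodule.add_mem _ hy hz
      | smul k y _ hy => rw [mul_smul_comm]; exact Submodule.smul_mem _ _ hy
  | zero => rw [zero_mul]; exact Submodule.zero_mem _
  | add x x' _ _ hx hx' => rw [add_mul]; exact Submodule.add_mem _ hx hx'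
  | smul k x _ hx => rw [smul_mul_assoc]; exact Submodule.smul_mem _ _ hx

lemma exists_p (hVAfin : FiniteDimensional K VA) (hVC1 : (1 : C) ∈ VC)
    (hVCgen : ∀ c : C, ∃ n : ℕ, c ∈ VC ^ n) :
    ∃ p : ℕ, 1 ≤ p ∧ ∀ i : ℕ, Submodule.map φ.toLinearMap (VA ^ i) ≤ VC ^ (p * i) := by
  haveI : FiniteDimensional K (Submodule.map φ.toLinearMap VA) := Module.Finite.map VA _
  obtain ⟨p₀, hp₀⟩ := fd_le_chain (fun n => VC ^ n) (fun hij => pow_le_pow_exp hVC1 hij)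
    (Submodule.map φ.toLinearMap VA) inferInstance hVCgen
  refine ⟨max p₀ 1, le_max_right _ _, fun i => ?_⟩
  rw [Submodule.map_pow]
  calc (Submodule.map φ.toLinearMap VA) ^ i ≤ (VC ^ (max p₀ 1)) ^ i :=
        pow_le_pow_base (le_trans hp₀ (pow_le_pow_exp hVC1 (le_max_left _ _))) i
    _ = VC ^ ((max p₀ 1) * i) := by rw [← pow_mul]

lemma exists_t (hVA1 : (1 : A) ∈ VA) (hVAgen : ∀ a : A, ∃ n : ℕ, a ∈ VA ^ n)
    (hpres : ∀ (g : G), ∀ x ∈ VA, σ g x ∈ VA)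
    (hcov : ∀ (g : G) (a : A), (u g : C) * φ a = φ (σ g a) * (u g : C))
    (hfree : Function.Bijective fun f : G →₀ A => f.sum fun g a => φ a * (u g : C))
    (hVCfin : FiniteDimensional K VC) :
    ∃ t : ℕ, 1 ≤ t ∧ ∀ i : ℕ, VC ^ i ≤ TT φ u VA (t * i) := by
  have hcover : ∀ c : C, ∃ n, c ∈ TT φ u VA n := by
    intro c
    obtain ⟨f, rfl⟩ := hfree.surjective c
    choose nf hnf using hVAgen
    refine ⟨f.support.sup fun g => nf (f g), ?_⟩
    refine Submodule.sum_mem _ fun g hg => ?_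
    refine Submodule.subset_span ⟨f g, ?_, g, rfl⟩
    exact pow_le_pow_exp hVA1 (Finset.le_sup (f := fun g => nf (f g)) hg) (hnf (f g))
  obtain ⟨t₀, ht₀⟩ := fd_le_chain (TT φ u VA) (fun hij => TT_mono φ u VA hVA1 hij) VC hVCfin hcover
  set t := max t₀ 1 with ht
  have hVCle : VC ≤ TT φ u VA t := le_trans ht₀ (TT_mono φ u VA hVA1 (le_max_left _ _))
  refine ⟨t, le_max_right _ _, fun i => ?_⟩
  induction i with
  | zero =>
      rw [pow_zero, Nat.mul_zero]
      intro c hc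
      rw [Submodule.mem_one] at hc
      obtain ⟨k, rfl⟩ := hc
      have h1 : algebraMap K C k = k • (φ (1:A) * ((u (1:G) : C))) := by
        simp [Algebra.algebraMap_eq_smul_one]
      rw [h1]
      refine Submodule.smul_mem _ _ (Submodule.subset_span ⟨1, ?_, 1, rfl⟩)
      rw [pow_zero]
      exact Submodule.one_le.mp (le_refl _)
  | succ n ih =>
      rw [pow_succ]
      calc VC ^ n * VC ≤ TT φ u VA (t * n) * TT φ u VA t :=
            Submodule.mul_le.mpr fun x hx y hy =>
              Submodule.mul_mem_mul (ih hx) (hVCle hy)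
        _ ≤ TT φ u VA (t * n + t) := TT_mul σ φ u VA hpres hcov _ _
        _ = TT φ u VA (t * (n+1)) := by ring_nf

lemma exists_q [Finite G] (hVC1 : (1 : C) ∈ VC) (hVCgen : ∀ c : C, ∃ n : ℕ, c ∈ VC ^ n) :
    ∃ q : ℕ, ∀ g : G, (u g : C) ∈ VC ^ q := by
  haveI := Fintype.ofFinite G
  choose n hn using fun g : G => hVCgen ((u g : C))
  exact ⟨Finset.univ.sup n, fun g => pow_le_pow_exp hVC1 (Finset.le_sup (Finset.mem_univ g)) (hn g)⟩

end Main

section Dir1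
variable {K A C G : Type u}
    [Field K] [Ring A] [Algebra K A] [Ring C] [Algebra K C] [Group G] [Finite G]
    (σ : G →* (A ≃ₐ[K] A)) (φ : A →ₐ[K] C) (u : G →* Cˣ)
    (VA : Submodule K A) (VC : Submodule K C)

lemma dir_res
    (hVA1 : (1 : A) ∈ VA) (hVAfin : FiniteDimensional K VA)
    (hVAgen : ∀ a : A, ∃ n : ℕ, a ∈ VA ^ n)
    (hpres : ∀ (g : G), ∀ x ∈ VA, σ g x ∈ VA)
    (hcov : ∀ (g : G) (a : A), (u g : C) * φ a = φ (σ g a) * (u g : C))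
    (hfree : Function.Bijective fun f : G →₀ A => f.sum fun g a => φ a * (u g : C))
    (hVC1 : (1 : C) ∈ VC) (hVCfin : FiniteDimensional K VC)
    (hVCgen : ∀ c : C, ∃ n : ℕ, c ∈ VC ^ n) :
    holonomicNumber K A VA ≤ holonomicNumber K C VC := by
  obtain ⟨p, hp1, hp⟩ := exists_p φ VA VC hVAfin hVC1 hVCgen
  obtain ⟨t, ht1, ht⟩ := exists_t σ φ u VA VC hVA1 hVAgen hpres hcov hfree hVCfin
  haveI := Fintype.ofFinite G
  refine sInf_le_sInf_of_isCoinitialFor ?_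
  rintro x ⟨M, iAdd, iK, iC, iT, hnt, ⟨M₀, hfd, hgen⟩, rfl⟩
  letI := iAdd; letI := iK; letI := iC; letI := iT
  letI iA : Module A M := Module.compHom M φ.toRingHom
  haveI iTA : IsScalarTower K A M := ⟨fun k a m => by
    show (φ (k • a)) • m = k • ((φ a) • m)
    rw [map_smul]
    exact smul_assoc k (φ a) m⟩
  have hsA : ∀ (a : A) (m : M), a • m = φ a • m := fun _ _ => rfl
  -- the enlarged generating subspace
  set MM : Submodule K M → Submodule K M :=
    fun S => Finset.univ.sup (fun g : G => S.map (bsmul K ((u g : C)))) with hMM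
  -- inclusion 1 : A-filtration inside C-filtration
  have h1 : ∀ (S : Submodule K M) (i : ℕ),
      modFilt K A M VA S i ≤ modFilt K C M VC S (p * i) := by
    intro S i
    refine Submodule.span_le.mpr ?_
    rintro z ⟨a, ha, m, hm, rfl⟩
    rw [hsA]
    exact Submodule.subset_span ⟨φ a, hp i ⟨a, ha, rfl⟩, m, hm, rfl⟩
  -- inclusion 2 : C-filtration inside A-filtration of MM S
  have h2 : ∀ (S : Submodule K M) (i : ℕ),
      modFilt K C M VC S i ≤ modFilt K A M VA (MM S) (t * i) := by
    intro S i
    refine Submodule.span_le.mpr ?_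
    rintro z ⟨c, hc, m, hm, rfl⟩
    have hcT := ht i hc
    clear hc
    induction hcT using Submodule.span_induction with
    | mem c hcg =>
        obtain ⟨a, ha, g, rfl⟩ := hcg
        have e1 : (φ a * (u g : C)) • m = a • (((u g : C)) • m) := by
          rw [hsA, mul_smul]
        rw [e1]
        refine Submodule.subset_span ⟨a, ha, ((u g : C)) • m, ?_, rfl⟩
        exact Finset.le_sup (f := fun g : G => S.map (bsmul K ((u g : C))))
          (Finset.mem_univ g) ⟨m, hm, rfl⟩
    | zero => rw [zero_smul]; exact Submodule.zero_mem _
    | add c c' _ _ hc hc' => rw [add_smul]; exact Submodule.add_mem _ hc hc'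
    | smul k c _ hc => rw [smul_assoc]; exact Submodule.smul_mem _ _ hc
  -- inclusion 3 : A-filtration of MM S inside a finite sup of translates
  have h3 : ∀ (S : Submodule K M) (i : ℕ),
      modFilt K A M VA (MM S) i ≤
        Finset.univ.sup (fun g : G => (modFilt K C M VC S (p * i)).map (bsmul K ((u g : C)))) := by
    intro S i
    refine Submodule.span_le.mpr ?_
    rintro z ⟨a, ha, m, hm, rfl⟩
    have hcomap : MM S ≤ Submodule.comap (bsmul K (φ a))
        (Finset.univ.sup (fun g : G => (modFilt K C M VC S (p * i)).map (bsmul K ((u g : C))))) := by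
      refine Finset.sup_le fun g _ => ?_
      rintro _ ⟨m₀, hm₀, rfl⟩
      have e2 : σ g (σ g⁻¹ a) = a := by rw [← hσmul σ]; simp
      have e1 : φ a * (u g : C) = (u g : C) * φ (σ g⁻¹ a) := by
        rw [hcov g (σ g⁻¹ a), e2]
      have e3 : (bsmul K (φ a) : M →ₗ[K] M) ((bsmul K ((u g : C)) : M →ₗ[K] M) m₀)
          = (bsmul K ((u g : C)) : M →ₗ[K] M) ((φ (σ g⁻¹ a)) • m₀) := by
        show φ a • ((u g : C) • m₀) = (u g : C) • ((φ (σ g⁻¹ a)) • m₀)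
        rw [← mul_smul, ← mul_smul, e1]
      refine Submodule.mem_comap.mpr ?_
      rw [e3]
      refine Finset.le_sup (f := fun g : G => (modFilt K C M VC S (p * i)).map
        (bsmul K ((u g : C)))) (Finset.mem_univ g) ?_
      refine ⟨(φ (σ g⁻¹ a)) • m₀, ?_, rfl⟩
      refine h1 S i ?_
      rw [← hsA]
      exact Submodule.subset_span ⟨σ g⁻¹ a, sigma_pow σ VA hpres g⁻¹ ha, m₀, hm₀, rfl⟩
    rw [hsA]
    exact hcomap hm
  -- finite dimensionality of MM S
  have hfd' : ∀ (S : Submodule K M), FiniteDimensional K S → FiniteDimensional K ↥(MM S) := by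
    intro S hS
    haveI := hS
    exact fd_finsetSup _ _ (fun g _ => Module.Finite.map S (bsmul K ((u g : C))))
  -- dimension bound
  have hdim : ∀ (S : Submodule K M), FiniteDimensional K S → ∀ i : ℕ,
      Module.finrank K ↥(modFilt K A M VA (MM S) i) ≤
        Fintype.card G * Module.finrank K ↥(modFilt K C M VC S (p * i)) := by
    intro S hS i
    haveI := hS
    haveI : FiniteDimensional K ↥(modFilt K C M VC S (p * i)) := modFilt_fd hVCfin S (p * i)
    haveI : ∀ g : G, FiniteDimensional K ↥((modFilt K C M VC S (p * i)).map
        (bsmul K ((u g : C)))) := fun g => Module.Finite.map _ _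
    haveI : FiniteDimensional K ↥(Finset.univ.sup
        (fun g : G => (modFilt K C M VC S (p * i)).map (bsmul K ((u g : C))))) :=
      fd_finsetSup _ _ (fun g _ => inferInstance)
    calc Module.finrank K ↥(modFilt K A M VA (MM S) i)
        ≤ Module.finrank K ↥(Finset.univ.sup
            (fun g : G => (modFilt K C M VC S (p * i)).map (bsmul K ((u g : C))))) :=
          Submodule.finrank_mono (h3 S i)
      _ ≤ ∑ g : G, Module.finrank K ↥((modFilt K C M VC S (p * i)).map
            (bsmul K ((u g : C)))) := finrank_finsetSup_le _ _ (fun g _ => inferInstance)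
      _ ≤ ∑ _g : G, Module.finrank K ↥(modFilt K C M VC S (p * i)) :=
          Finset.sum_le_sum (fun g _ => Submodule.finrank_map_le _ _)
      _ = Fintype.card G * Module.finrank K ↥(modFilt K C M VC S (p * i)) := by
          rw [Finset.sum_const, Finset.card_univ, smul_eq_mul]
  -- build the entry for `A`
  refine ⟨gkDim K A M VA, ⟨M, iAdd, iK, iA, iTA, hnt,
    ⟨MM M₀, hfd' M₀ hfd, fun m => ?_⟩, rfl⟩, ?_⟩
  · obtain ⟨n, hn⟩ := hgen m
    exact ⟨t * n, h2 M₀ n hn⟩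
  · -- gkDim K A M VA ≤ gkDim K C M VC
    refine sInf_le_sInf_of_isCoinitialFor ?_
    rintro y ⟨S, hSfd, hSgen, rfl⟩
    refine ⟨gammaDeg (fun i => Module.finrank K ↥(modFilt K A M VA (MM S) i)),
      ⟨MM S, hfd' S hSfd, fun m => ?_, rfl⟩, ?_⟩
    · obtain ⟨n, hn⟩ := hSgen m
      exact ⟨t * n, h2 S n hn⟩
    · refine gammaDeg_le_gammaDeg _ _ (Fintype.card G) p 0 hp1 ?_
      intro i _
      have := hdim S hSfd i
      simpa [Nat.add_zero] using this
end Dir1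

section Dir2
variable {K A C G : Type u}
    [Field K] [Ring A] [Algebra K A] [Ring C] [Algebra K C] [Group G] [Finite G]
    (σ : G →* (A ≃ₐ[K] A)) (φ : A →ₐ[K] C) (u : G →* Cˣ)
    (VA : Submodule K A) (VC : Submodule K C)

lemma actFun_apply {N : Type u} [AddCommGroup N] [Module K N] [Module A N] [IsScalarTower K A N]
    (g : G) (a : A) (x : G →₀ N) :
    actFun σ N g a x = x.sum fun h n => Finsupp.single (g * h) ((σ ((g * h)⁻¹) a) • n) := by
  simp [actFun, Finsupp.lsum_apply, Finsupp.sum, bsmul']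

lemma dir_ind
    (hVA1 : (1 : A) ∈ VA) (hVAfin : FiniteDimensional K VA)
    (hVAgen : ∀ a : A, ∃ n : ℕ, a ∈ VA ^ n)
    (hpres : ∀ (g : G), ∀ x ∈ VA, σ g x ∈ VA)
    (hcov : ∀ (g : G) (a : A), (u g : C) * φ a = φ (σ g a) * (u g : C))
    (hfree : Function.Bijective fun f : G →₀ A => f.sum fun g a => φ a * (u g : C))
    (hVC1 : (1 : C) ∈ VC) (hVCfin : FiniteDimensional K VC)
    (hVCgen : ∀ c : C, ∃ n : ℕ, c ∈ VC ^ n) :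
    holonomicNumber K C VC ≤ holonomicNumber K A VA := by
  classical
  obtain ⟨p, hp1, hp⟩ := exists_p φ VA VC hVAfin hVC1 hVCgen
  obtain ⟨t, ht1, ht⟩ := exists_t σ φ u VA VC hVA1 hVAgen hpres hcov hfree hVCfin
  obtain ⟨q, hq⟩ := exists_q u VC hVC1 hVCgen
  haveI := Fintype.ofFinite G
  refine sInf_le_sInf_of_isCoinitialFor ?_
  rintro x ⟨N, iAdd, iK, iA, iT, hnt, ⟨N₀, hfd, hgen⟩, rfl⟩
  letI := iAdd; letI := iK; letI := iA; letI := iT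
  letI iCM : Module C (G →₀ N) := Module.compHom _ (PhiA σ φ u N hfree hcov).toRingHom
  have hsC : ∀ (c : C) (x : G →₀ N), c • x = PhiL σ φ u N hfree c x := fun _ _ => rfl
  haveI iTC : IsScalarTower K C (G →₀ N) := ⟨fun k c x => by
    rw [hsC, hsC, map_smul]
    rfl⟩
  have hgenact : ∀ (g : G) (a : A) (x : G →₀ N),
      (φ a * (u g : C)) • x = actFun σ N g a x := fun g a x => by
    rw [hsC, PhiL_gen]
  have hφact : ∀ (a : A) (h : G) (n : N),
      (φ a) • (Finsupp.single h n) = Finsupp.single h ((σ h⁻¹ a) • n) := by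
    intro a h n
    have e : φ a = φ a * ((u (1:G) : C)) := by simp
    rw [e, hgenact, actFun_single]
    rw [one_mul]
  have huact : ∀ (g h : G) (n : N),
      ((u g : C)) • (Finsupp.single h n) = Finsupp.single (g * h) n := by
    intro g h n
    have e : (u g : C) = φ (1:A) * ((u g : C)) := by simp
    rw [e, hgenact, actFun_single]
    rw [map_one, one_smul]
  -- the product subspace `P S`
  let P : Submodule K N → Submodule K (G →₀ N) := fun S =>
    { carrier := {f : G →₀ N | ∀ g : G, f g ∈ S}
      add_mem' := fun hf hg g => by
        rw [Finsupp.add_apply]; exact S.add_mem (hf g) (hg g)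
      zero_mem' := fun g => by rw [Finsupp.zero_apply]; exact S.zero_mem
      smul_mem' := fun k f hf g => by
        rw [Finsupp.smul_apply]; exact S.smul_mem k (hf g) }
  have hsingleP : ∀ (S : Submodule K N) (h : G) (n : N), n ∈ S → Finsupp.single h n ∈ P S := by
    intro S h n hn g
    rw [Finsupp.single_apply]
    split_ifs
    · exact hn
    · exact S.zero_mem
  have hPle : ∀ S : Submodule K N,
      P S ≤ Finset.univ.sup (fun g : G => S.map (Finsupp.lsingle g : N →ₗ[K] (G →₀ N))) := by
    intro S f hf
    have e : f = ∑ g ∈ f.support, Finsupp.single g (f g) := (Finsupp.sum_single f).symm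
    rw [e]
    refine Submodule.sum_mem _ fun g _ => ?_
    exact Finset.le_sup (f := fun g : G => S.map (Finsupp.lsingle g : N →ₗ[K] (G →₀ N)))
      (Finset.mem_univ g) ⟨f g, hf g, rfl⟩
  have hPfd : ∀ S : Submodule K N, FiniteDimensional K S → FiniteDimensional K (P S) := by
    intro S hS
    haveI := hS
    haveI : FiniteDimensional K ↥(Finset.univ.sup
        (fun g : G => S.map (Finsupp.lsingle g : N →ₗ[K] (G →₀ N)))) :=
      fd_finsetSup _ _ (fun g _ => Module.Finite.map S _)
    exact Submodule.finiteDimensional_of_le (hPle S)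
  have hPdim : ∀ S : Submodule K N, FiniteDimensional K S →
      Module.finrank K ↥(P S) ≤ Fintype.card G * Module.finrank K ↥S := by
    intro S hS
    haveI := hS
    haveI : ∀ g : G, FiniteDimensional K ↥(S.map (Finsupp.lsingle g : N →ₗ[K] (G →₀ N))) :=
      fun g => Module.Finite.map S _
    haveI : FiniteDimensional K ↥(Finset.univ.sup
        (fun g : G => S.map (Finsupp.lsingle g : N →ₗ[K] (G →₀ N)))) :=
      fd_finsetSup _ _ (fun g _ => inferInstance)
    calc Module.finrank K ↥(P S)
        ≤ Module.finrank K ↥(Finset.univ.sup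
            (fun g : G => S.map (Finsupp.lsingle g : N →ₗ[K] (G →₀ N)))) :=
          Submodule.finrank_mono (hPle S)
      _ ≤ ∑ g : G, Module.finrank K ↥(S.map (Finsupp.lsingle g : N →ₗ[K] (G →₀ N))) :=
          finrank_finsetSup_le _ _ (fun g _ => inferInstance)
      _ ≤ ∑ _g : G, Module.finrank K ↥S :=
          Finset.sum_le_sum (fun g _ => Submodule.finrank_map_le _ _)
      _ = Fintype.card G * Module.finrank K ↥S := by
          rw [Finset.sum_const, Finset.card_univ, smul_eq_mul]
  -- inclusion : C-filtration of P S inside P of A-filtration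
  have hIncl : ∀ (S : Submodule K N) (i : ℕ),
      modFilt K C (G →₀ N) VC (P S) i ≤ P (modFilt K A N VA S (t * i)) := by
    intro S i
    refine Submodule.span_le.mpr ?_
    rintro z ⟨c, hc, x, hx, rfl⟩
    have hcT := ht i hc
    clear hc
    induction hcT using Submodule.span_induction with
    | mem c hcg =>
        obtain ⟨a, ha, g, rfl⟩ := hcg
        rw [hgenact, actFun_apply]
        refine Submodule.sum_mem _ fun h _ => ?_
        refine hsingleP _ _ _ ?_
        exact Submodule.subset_span ⟨σ ((g * h)⁻¹) a, sigma_pow σ VA hpres _ ha, x h, hx h, rfl⟩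
    | zero => rw [zero_smul]; exact Submodule.zero_mem _
    | add c c' _ _ hcm hcm' => rw [add_smul]; exact Submodule.add_mem _ hcm hcm'
    | smul k c _ hcm => rw [smul_assoc]; exact Submodule.smul_mem _ _ hcm
  -- generation of `G →₀ N` over `C` from a generating subspace of `N` over `A`
  have hsingleFilt : ∀ (S : Submodule K N) (j : ℕ) (n : N), n ∈ modFilt K A N VA S j →
      Finsupp.single (1:G) n ∈ modFilt K C (G →₀ N) VC (P S) (p * j) := by
    intro S j n hn
    induction hn using Submodule.span_induction with
    | mem z hz =>
        obtain ⟨a, ha, n₀, hn₀, rfl⟩ := hz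
        have e : Finsupp.single (1:G) (a • n₀) = (φ a) • Finsupp.single (1:G) n₀ := by
          rw [hφact, inv_one, map_one]
          rfl
        rw [e]
        exact Submodule.subset_span ⟨φ a, hp j ⟨a, ha, rfl⟩, _, hsingleP S 1 n₀ hn₀, rfl⟩
    | zero => rw [Finsupp.single_zero]; exact Submodule.zero_mem _
    | add y z _ _ hy hz => rw [Finsupp.single_add]; exact Submodule.add_mem _ hy hz
    | smul k n _ hn =>
        rw [← Finsupp.smul_single]
        exact Submodule.smul_mem _ _ hn
  have hgenM : ∀ (S : Submodule K N), (∀ n : N, ∃ j, n ∈ modFilt K A N VA S j) →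
      ∀ x : G →₀ N, ∃ n, x ∈ modFilt K C (G →₀ N) VC (P S) n := by
    intro S hSgen x
    choose jf hjf using hSgen
    set j := x.support.sup fun h => jf (x h) with hj
    refine ⟨q + p * j, ?_⟩
    have e : x = ∑ h ∈ x.support, Finsupp.single h (x h) := (Finsupp.sum_single x).symm
    rw [e]
    refine Submodule.sum_mem _ fun h hh => ?_
    have h1 : x h ∈ modFilt K A N VA S j :=
      modFilt_mono_exp hVA1 S (Finset.le_sup (f := fun h => jf (x h)) hh) (hjf (x h))
    have h2 := hsingleFilt S _ _ h1
    have h3 : Finsupp.single h (x h) = (u h : C) • Finsupp.single (1:G) (x h) := by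
      rw [huact, mul_one]
    rw [h3]
    exact smul_modFilt (hq h) h2
  -- nontriviality
  haveI := hnt
  obtain ⟨n0, hn0⟩ := exists_ne (0 : N)
  haveI hntM : Nontrivial (G →₀ N) :=
    ⟨⟨Finsupp.single 1 n0, 0, by
      simp only [ne_eq, Finsupp.single_eq_zero]
      exact hn0⟩⟩
  -- the entry
  refine ⟨gkDim K C (G →₀ N) VC, ⟨G →₀ N, inferInstance, inferInstance, iCM, iTC, hntM,
    ⟨P N₀, hPfd N₀ hfd, hgenM N₀ hgen⟩, rfl⟩, ?_⟩
  -- gkDim of the induced module is at most gkDim of N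
  refine sInf_le_sInf_of_isCoinitialFor ?_
  rintro y ⟨S, hSfd, hSgen, rfl⟩
  refine ⟨gammaDeg (fun i => Module.finrank K ↥(modFilt K C (G →₀ N) VC (P S) i)),
    ⟨P S, hPfd S hSfd, hgenM S hSgen, rfl⟩, ?_⟩
  refine gammaDeg_le_gammaDeg _ _ (Fintype.card G) t 0 ht1 ?_
  intro i _
  haveI := hSfd
  haveI : FiniteDimensional K ↥(modFilt K A N VA S (t * i)) := modFilt_fd hVAfin S (t * i)
  haveI : FiniteDimensional K ↥(P (modFilt K A N VA S (t * i))) := hPfd _ inferInstance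
  calc Module.finrank K ↥(modFilt K C (G →₀ N) VC (P S) i)
      ≤ Module.finrank K ↥(P (modFilt K A N VA S (t * i))) :=
        Submodule.finrank_mono (hIncl S i)
    _ ≤ Fintype.card G * Module.finrank K ↥(modFilt K A N VA S (t * i)) :=
        hPdim _ inferInstance
    _ = Fintype.card G * Module.finrank K ↥(modFilt K A N VA S (t * i + 0)) := by
        rw [Nat.add_zero]
end Dir2

end Aux

/-- **Morita-type invariance of the holonomic number for crossed products.**
Let `A` be a finitely generated `K`-algebra with standard filtration `{VA^i}`,
`G` a finite group acting on `A` by filtration-preserving `K`-algebra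
automorphisms `σ`, with `|G|` invertible in `K`, and let `C = A#G` be the skew
group algebra: `C` contains `A` via `φ`, contains `G` as units `u` with
`u g * φ a = φ (σ g a) * u g`, and is free over `A` with basis `{u g}`. Then the
holonomic numbers satisfy `h_{A#G} = h_A`. -/
theorem holonomicNumber_crossProduct (K A C G : Type u)
    [Field K] [Ring A] [Algebra K A] [Ring C] [Algebra K C] [Group G] [Finite G]
    (hG : (Nat.card G : K) ≠ 0)
    -- the action of `G` on `A` by `K`-algebra automorphisms
    (σ : G →* (A ≃ₐ[K] A))
    -- `A` is a finitely generated algebra with standard filtration `{VA^i}`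
    (VA : Submodule K A) (hVA1 : (1 : A) ∈ VA) (hVAfin : FiniteDimensional K VA)
    (hVAgen : ∀ a : A, ∃ n : ℕ, a ∈ VA ^ n)
    -- the action preserves the standard filtration
    (hpres : ∀ (g : G), ∀ x ∈ VA, σ g x ∈ VA)
    -- `C = A#G` is the skew group algebra
    (φ : A →ₐ[K] C) (u : G →* Cˣ)
    (hcov : ∀ (g : G) (a : A), (u g : C) * φ a = φ (σ g a) * (u g : C))
    (hfree : Function.Bijective fun f : G →₀ A => f.sum fun g a => φ a * (u g : C))
    -- a standard filtration `{VC^i}` on `C`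
    (VC : Submodule K C) (hVC1 : (1 : C) ∈ VC) (hVCfin : FiniteDimensional K VC)
    (hVCgen : ∀ c : C, ∃ n : ℕ, c ∈ VC ^ n) :
    holonomicNumber K C VC = holonomicNumber K A VA :=
  le_antisymm
    (dir_ind σ φ u VA VC hVA1 hVAfin hVAgen hpres hcov hfree hVC1 hVCfin hVCgen)
    (dir_res σ φ u VA VC hVA1 hVAfin hVAgen hpres hcov hfree hVC1 hVCfin hVCgen)
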